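/- For every n ≥ 2: if a(n−1) mod 4 > a(n+1) mod 4 and a(n) mod 4 ≥ a(n+2) mod 4, then 4·S(n) = a(n)·a(n+1) + 2, where S(n) = Σ_{k=0}^{n} a(k). -/

import Mathlib

/-- Sum of base-`d` digits of `n`. -/
def sdig (d n : ℕ) : ℕ := (Nat.digits d n).sum

/-- `t_d(n)`: base-`d` digit sum of `n`, reduced mod `d`. -/
def td (d n : ℕ) : ℕ := sdig d n % d

/-- `a_{j,d}(n)`: n-th natural (0-indexed, increasing) with base-`d` digit sum ≡ j mod d. -/
noncomputable def agen (d j n : ℕ) : ℕ := Nat.nth (fun k => sdig d k % d = j) n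

/-- n-th odious number (binary digit sum odd), 0-indexed increasing. -/
noncomputable def odious (n : ℕ) : ℕ := Nat.nth (fun k => (Nat.digits 2 k).sum % 2 = 1) n

/-- n-th evil number (binary digit sum even), 0-indexed increasing. -/
noncomputable def evil (n : ℕ) : ℕ := Nat.nth (fun k => (Nat.digits 2 k).sum % 2 = 0) n

/-- Thue–Morse sequence: parity of the binary digit sum. -/
def tm (n : ℕ) : ℕ := (Nat.digits 2 n).sum % 2

/-! Writing `tm` for the parity of the binary digit sum, `tm (2k) = tm k` and
`tm (2k+1) = 1 - tm k`, so exactly one of `2k, 2k+1` is odious. Hence `a(k) + tm k = 2k + 1`,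
`a(2j) + a(2j+1) = 8j + 3`, and `S(2m-1) = 4m² - m`. Modulo 4, the residue hypotheses rule out
odd `n` and force `tm (n/2) = 0` for even `n = 2m`; then `a(n) = 4m+1`, `a(n+1) = 4m+2`, and the
identity is `4(4m² + 3m + 1) = (4m+1)(4m+2) + 2`. -/

lemma tm_le_one (n : ℕ) : tm n ≤ 1 :=
  Nat.le_of_lt_succ (Nat.mod_lt _ two_pos)

lemma tm_two_mul (k : ℕ) : tm (2 * k) = tm k := by
  rcases Nat.eq_zero_or_pos k with rfl | hk
  · rfl
  · have := Nat.digits_add 2 one_lt_two 0 k two_pos (Or.inr hk.ne')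
    rw [zero_add] at this
    simp only [tm, this, List.sum_cons, zero_add]

lemma tm_two_mul_add_one (k : ℕ) : tm (2 * k + 1) = 1 - tm k := by
  have := Nat.digits_add 2 one_lt_two 1 k one_lt_two (Or.inl one_ne_zero)
  rw [add_comm 1] at this
  simp only [tm, this, List.sum_cons]
  omega

lemma count_tm_eq_one_two_mul (m : ℕ) : Nat.count (tm · = 1) (2 * m) = m := by
  induction m with
  | zero => rfl
  | succ m ih =>
    rw [Nat.mul_succ, Nat.count_succ, Nat.count_succ, ih, tm_two_mul_add_one, tm_two_mul]
    have := tm_le_one m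
    split_ifs <;> omega

lemma odious_add_tm (n : ℕ) : odious n + tm n = 2 * n + 1 := by
  have hnth {k : ℕ} (hk : tm k = 1) : odious (Nat.count (tm · = 1) k) = k := Nat.nth_count hk
  obtain h | h : tm n = 0 ∨ tm n = 1 := by have := tm_le_one n; omega
  · have h2n : ¬ tm (2 * n) = 1 := by rw [tm_two_mul, h]; decide
    have := hnth (k := 2 * n + 1) (by rw [tm_two_mul_add_one, h])
    rw [Nat.count_succ, count_tm_eq_one_two_mul, if_neg h2n, add_zero] at this
    omega
  · have := hnth (k := 2 * n) (by rw [tm_two_mul, h])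
    rw [count_tm_eq_one_two_mul] at this
    omega

lemma odious_two_mul (m : ℕ) : odious (2 * m) = 4 * m + 1 - tm m := by
  have := odious_add_tm (2 * m)
  rw [tm_two_mul] at this
  omega

lemma odious_two_mul_add_one (m : ℕ) : odious (2 * m + 1) = 4 * m + 2 + tm m := by
  have := odious_add_tm (2 * m + 1)
  have := tm_le_one m
  rw [tm_two_mul_add_one] at *
  omega

lemma sum_range_two_mul_odious (m : ℕ) :
    ∑ k ∈ Finset.range (2 * m), odious k + m = 4 * m ^ 2 := by
  induction m with
  | zero => rfl
  | succ m ih =>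
    have hpair : odious (2 * m) + odious (2 * m + 1) = 8 * m + 3 := by
      rw [odious_two_mul, odious_two_mul_add_one]
      have := tm_le_one m
      omega
    rw [Nat.mul_succ, Finset.sum_range_succ, Finset.sum_range_succ]
    linarith

theorem stmt18_general (n : ℕ)
    (h1 : odious (n + 1) % 4 < odious (n - 1) % 4)
    (h2 : odious (n + 2) % 4 ≤ odious n % 4) :
    4 * ∑ k ∈ Finset.range (n + 1), odious k = odious n * odious (n + 1) + 2 := by
  obtain ⟨m, rfl | rfl⟩ := Nat.even_or_odd' n
  · have htm : tm m = 0 := by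
      -- for `m = 0`, `2 * m - 1` truncates to `0`, and `a(0) = 1` already contradicts `h1`
      have := odious_add_tm (2 * m - 1)
      have := tm_le_one (2 * m - 1)
      have := tm_le_one m
      rw [odious_two_mul_add_one] at h1
      omega
    have hsum := sum_range_two_mul_odious m
    rw [Finset.sum_range_succ, odious_two_mul, odious_two_mul_add_one, htm, Nat.sub_zero, add_zero]
    linarith
  · rw [show 2 * m + 1 + 1 = 2 * (m + 1) by ring, show 2 * m + 1 + 2 = 2 * (m + 1) + 1 by ring,
      Nat.add_sub_cancel, odious_two_mul, odious_two_mul, odious_two_mul_add_one,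
      odious_two_mul_add_one] at *
    have := tm_le_one m
    have := tm_le_one (m + 1)
    omega

theorem stmt18 (n : ℕ) (hn : 2 ≤ n)
    (h1 : odious (n + 1) % 4 < odious (n - 1) % 4)
    (h2 : odious (n + 2) % 4 ≤ odious n % 4) :
    4 * ∑ k ∈ Finset.range (n + 1), odious k = odious n * odious (n + 1) + 2 :=
  stmt18_general n h1 h2
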